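/- Let P be a locally finite partially ordered set, x < y in P, and Q, Q' ⊆ P subsets complementing the interval [x,y]_P. Write t⁻¹ for the substitution t_z ↦ t_z^{−1} (z ∈ P) in A_P. Then Inv_Q θ (x, y; t) = −(t_y/t_x) · Inv_{Q'} θ (x, y; t⁻¹), i.e., the (x,y)-entry of the inverse of θ restricted to Q equals minus t_y/t_x times the image under the substitution t ↦ t⁻¹ of the (x,y)-entry of the inverse of θ restricted to Q'. -/

import Mathlib

/-!
Put `θ̄(x,y) = ∑_{x ≤ z ≤ y} μ(z,y) t_y/t_z`. Möbius inversion gives `θ̄ ∗ θ = δ`, and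
`θ̄(x,y) = (t_y/t_x) θ(x,y; t⁻¹)`; conjugating by the diagonal `t` therefore turns
`Inv_{Q'} θ̄ (x,y)` into `(t_y/t_x) Inv_{Q'} θ (x,y; t⁻¹)`. So it suffices to show
`Inv_Q ε (x,y) = -Inv_{Q'} ε' (x,y)` whenever `ε' ∗ ε = δ` and `ε` has unit diagonal.

For this, let `R = Q'ᶜ ∪ {y}` and let `g = Inv_R ε (·, y)`, computed by the usual column
recursion, which makes sense at every point of `[x, y]`. Then `ε ∗ (g · 1_R) = δ_y - g · 1_{Rᶜ}`,
and applying `ε'` gives `g(u) + ∑_{u < z ≤ y, z ∉ R} ε'(u,z) g(z) = ε'(u,y)`. On `Q'` this is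
the recursion for `Inv_{Q'} ε' (·, y)`, satisfied by `-g` away from `y`, while
`Inv_R ε (x,y) = Inv_Q ε (x,y)` because `R` and `Q` agree on `(x, y]`.
-/

open Finset
open scoped Classical

variable {P A : Type*}

/-- The zeta function of a poset, as an element of its incidence algebra. -/
noncomputable def zeta [PartialOrder P] [CommRing A] : P → P → A :=
  fun x y => if x ≤ y then 1 else 0

/-- `IsInvOn Q ε η` says that `η` represents the inverse `Inv_Q ε` of the restriction
`ε|_{Q×Q}` of `ε` in the incidence algebra `I_A(Q)` of the subposet `Q ⊆ P`.
Elements of `I_A(Q)` are encoded as functions `P → P → A` supported on pairs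
`x ≤ y` with `x, y ∈ Q`; convolution over `Q` is the sum over `z ∈ [x,y]_Q`,
and the unit of `I_A(Q)` is the Kronecker delta on `Q`. -/
noncomputable def IsInvOn [PartialOrder P] [LocallyFiniteOrder P] [CommRing A]
    (Q : Set P) (ε η : P → P → A) : Prop :=
  (∀ x y, ¬(x ∈ Q ∧ y ∈ Q ∧ x ≤ y) → η x y = 0) ∧
  (∀ x ∈ Q, ∀ y ∈ Q,
    ∑ z ∈ (Finset.Icc x y).filter (· ∈ Q), ε x z * η z y = if x = y then 1 else 0) ∧
  (∀ x ∈ Q, ∀ y ∈ Q,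
    ∑ z ∈ (Finset.Icc x y).filter (· ∈ Q), η x z * ε z y = if x = y then 1 else 0)

/-- The Laurent polynomial algebra `A_P = ℚ[t_x^{±1} : x ∈ P]`, realized as the monoid
algebra of `ℚ` over the additive group of finitely supported exponent vectors `P →₀ ℤ`. -/
abbrev AP (P : Type*) : Type _ := AddMonoidAlgebra ℚ (P →₀ ℤ)

/-- The exponent vector of the variable `t_x`. -/
noncomputable def tv (x : P) : P →₀ ℤ := Finsupp.single x 1

/-- The element `θ(x,y) = Σ_{x ≤ z ≤ y} μ(z,y) · t_z/t_x` of `I_{A_P}(P)`,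
where `mob` is the Möbius function of `P`. -/
noncomputable def theta [PartialOrder P] [LocallyFiniteOrder P]
    (mob : P → P → ℚ) (x y : P) : AP P :=
  ∑ z ∈ Finset.Icc x y, mob z y • AddMonoidAlgebra.single (tv z - tv x) (1 : ℚ)

section RestrictedInverse

variable [PartialOrder P] [LocallyFiniteOrder P]

lemma card_Icc_lt_card_Icc_of_mem_Ioc {u v z : P} (hz : z ∈ Ioc u v) :
    #(Icc z v) < #(Icc u v) := by
  rw [mem_Ioc] at hz
  exact card_lt_card (Icc_ssubset_Icc_left (hz.1.le.trans hz.2) hz.1 le_rfl)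

lemma sum_Icc_sum_Icc_comm {M : Type*} [AddCommMonoid M] (f : P → P → M) (u v : P) :
    ∑ s ∈ Icc u v, ∑ z ∈ Icc s v, f s z = ∑ z ∈ Icc u v, ∑ s ∈ Icc u z, f s z :=
  sum_comm' fun s z => by
    simp only [mem_Icc]
    exact ⟨fun h => ⟨⟨h.1.1, h.2.1⟩, h.1.1.trans h.2.1, h.2.2⟩,
      fun h => ⟨⟨h.1.1, h.1.2.trans h.2.2⟩, h.1.2, h.2.2⟩⟩

lemma sum_filter_Icc_eq_add {M : Type*} [AddCommMonoid M] (p : P → Prop) [DecidablePred p]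
    (f : P → M) {u v : P} (huv : u ≤ v) :
    ∑ z ∈ (Icc u v).filter p, f z = (if p u then f u else 0) + ∑ z ∈ (Ioc u v).filter p, f z := by
  rw [← Ioc_insert_left huv, filter_insert]
  split_ifs
  · exact sum_insert fun h => (mem_Ioc.mp (mem_filter.mp h).1).1.false
  · rw [zero_add]

variable [Ring A]

/-- `Inv_Q ε (u, v)` for `ε` with unit diagonal (see `IsInvOn.eq_recInv`). The recursion also
makes sense for `u ∉ Q`. -/
noncomputable def recInv (Q : Set P) (ε : P → P → A) (u v : P) : A :=
  if u = v then 1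
  else -∑ z ∈ (Ioc u v).attach, if (z : P) ∈ Q then ε u z * recInv Q ε z v else 0
termination_by #(Icc u v)
decreasing_by exact card_Icc_lt_card_Icc_of_mem_Ioc z.2

lemma recInv_self (Q : Set P) (ε : P → P → A) (v : P) : recInv Q ε v v = 1 := by
  rw [recInv, if_pos rfl]

lemma recInv_of_ne (Q : Set P) (ε : P → P → A) {u v : P} (h : u ≠ v) :
    recInv Q ε u v = -∑ z ∈ (Ioc u v).filter (· ∈ Q), ε u z * recInv Q ε z v := by
  rw [recInv, if_neg h, sum_filter,
    sum_attach (Ioc u v) fun z => if z ∈ Q then ε u z * recInv Q ε z v else 0]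

lemma recInv_add_sum (Q : Set P) (ε : P → P → A) (u v : P) :
    recInv Q ε u v + ∑ z ∈ (Ioc u v).filter (· ∈ Q), ε u z * recInv Q ε z v
      = if u = v then 1 else 0 := by
  by_cases h : u = v
  · subst h
    simp [recInv_self]
  · rw [recInv_of_ne Q ε h, if_neg h, neg_add_cancel]

theorem eq_recInv_of_recurrence {Q S : Set P} (hQS : Q ⊆ S) {ε : P → P → A} {v : P}
    {f : P → A} (hv : f v = 1)
    (hf : ∀ u ∈ S, u < v → f u = -∑ z ∈ (Ioc u v).filter (· ∈ Q), ε u z * f z)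
    {u : P} (hu : u ∈ S) (huv : u ≤ v) : f u = recInv Q ε u v := by
  rcases huv.eq_or_lt with rfl | hlt
  · rw [hv, recInv_self]
  · rw [hf u hu hlt, recInv_of_ne Q ε hlt.ne]
    congr 1
    refine sum_congr rfl fun z hz => ?_
    obtain ⟨hz, hzQ⟩ := mem_filter.mp hz
    rw [eq_recInv_of_recurrence hQS hv hf (hQS hzQ) (mem_Ioc.mp hz).2]
termination_by #(Icc u v)
decreasing_by exact card_Icc_lt_card_Icc_of_mem_Ioc hz

theorem recInv_congr {Q R : Set P} (ε : P → P → A) {u v : P}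
    (h : ∀ z ∈ Ioc u v, z ∈ Q ↔ z ∈ R) : recInv Q ε u v = recInv R ε u v := by
  by_cases huv : u = v
  · rw [huv, recInv_self, recInv_self]
  · rw [recInv_of_ne Q ε huv, recInv_of_ne R ε huv, filter_congr fun z hz => h z hz]
    congr 1
    refine sum_congr rfl fun z hz => ?_
    obtain ⟨hz, -⟩ := mem_filter.mp hz
    rw [recInv_congr ε fun s hs => h s (Ioc_subset_Ioc_left (mem_Ioc.mp hz).1.le hs)]
termination_by #(Icc u v)
decreasing_by exact card_Icc_lt_card_Icc_of_mem_Ioc hz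

theorem recInv_map {B F : Type*} [CommRing B] [FunLike F A B] [RingHomClass F A B] (σ : F)
    (w : P → P → B) (hw : ∀ a b c, w a b * w b c = w a c) (hw₀ : ∀ a, w a a = 1) (Q : Set P)
    (ε : P → P → A) {u v : P} (huv : u ≤ v) :
    recInv Q (fun a b => w a b * σ (ε a b)) u v = w u v * σ (recInv Q ε u v) := by
  refine (eq_recInv_of_recurrence (Set.subset_univ Q) (f := fun a => w a v * σ (recInv Q ε a v))
    ?_ (fun a _ hav => ?_) (Set.mem_univ u) huv).symm
  · rw [recInv_self, map_one, mul_one, hw₀]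
  · rw [recInv_of_ne Q ε hav.ne, map_neg, map_sum, mul_neg, mul_sum]
    congr 1
    refine sum_congr rfl fun z _ => ?_
    rw [map_mul, ← hw a z v]
    ring

end RestrictedInverse

section LeftInverse

variable [PartialOrder P] [LocallyFiniteOrder P] [Ring A]

def IsLeftInverse (ε' ε : P → P → A) : Prop :=
  ∀ a b, ∑ s ∈ Icc a b, ε' a s * ε s b = if a = b then 1 else 0

variable {ε ε' : P → P → A}

lemma IsLeftInverse.sum_Icc_mul_sum_Icc (hinv : IsLeftInverse ε' ε) (k : P → A) {u v : P}
    (huv : u ≤ v) : ∑ s ∈ Icc u v, ε' u s * ∑ z ∈ Icc s v, ε s z * k z = k u := by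
  simp_rw [mul_sum, ← mul_assoc]
  rw [sum_Icc_sum_Icc_comm (fun s z => ε' u s * ε s z * k z)]
  simp_rw [← sum_mul, hinv u, ite_mul, one_mul, zero_mul]
  rw [sum_ite_eq]
  simp [huv]

lemma sum_Icc_mul_ite_mem_recInv (R : Set P) (hε : ∀ z, ε z z = 1) {s v : P} (hsv : s ≤ v) :
    ∑ z ∈ Icc s v, ε s z * (if z ∈ R then recInv R ε z v else 0)
      = (if s = v then 1 else 0) - (if s ∈ R then 0 else recInv R ε s v) := by
  simp_rw [mul_ite, mul_zero]
  rw [← sum_filter, sum_filter_Icc_eq_add (· ∈ R) _ hsv, hε, one_mul, ← recInv_add_sum R ε s v]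
  split_ifs <;> abel

theorem IsLeftInverse.recInv_add_sum_filter_notMem (hinv : IsLeftInverse ε' ε)
    (hε : ∀ z, ε z z = 1) (R : Set P) {u v : P} (huv : u ≤ v) :
    recInv R ε u v + ∑ z ∈ (Ioc u v).filter (· ∉ R), ε' u z * recInv R ε z v = ε' u v := by
  have hL := hinv.sum_Icc_mul_sum_Icc (fun z => if z ∈ R then recInv R ε z v else 0) huv
  rw [sum_congr rfl fun s hs => by rw [sum_Icc_mul_ite_mem_recInv R hε (mem_Icc.mp hs).2]]
    at hL
  have hε' : ε' u u = 1 := by simpa [hε] using hinv u u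
  simp_rw [mul_sub, sum_sub_distrib, mul_ite, mul_one, mul_zero, sum_ite_eq'] at hL
  rw [if_pos (right_mem_Icc.mpr huv), sum_ite, sum_const_zero, zero_add,
    sum_filter_Icc_eq_add (· ∉ R) _ huv, hε', one_mul] at hL
  split_ifs at hL with hu
  · rw [← hL]
    abel
  · exact (sub_eq_zero.mp hL).symm

theorem IsLeftInverse.recInv_eq_neg_recInv_insert_compl (hinv : IsLeftInverse ε' ε)
    (hε : ∀ z, ε z z = 1) {Q : Set P} {u v : P} (hu : u ∈ Q) (hv : v ∈ Q) (huv : u < v) :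
    recInv Q ε' u v = -recInv (insert v Qᶜ) ε u v := by
  set R := insert v Qᶜ with hR
  clear_value R
  have key := eq_recInv_of_recurrence (ε := ε') subset_rfl
    (f := fun z => if z = v then 1 else -recInv R ε z v) (if_pos rfl) ?_ hu huv.le
  · simpa [huv.ne] using key.symm
  intro z hz hzv
  have hsplit : (Ioc z v).filter (· ∈ Q) = insert v ((Ioc z v).filter (· ∉ R)) := by
    ext s
    by_cases hs : s = v
    · simp [hs, hzv, hv]
    · simp [hs, hR]
  rw [hsplit, sum_insert (by simp [hR]), if_pos rfl, mul_one, if_neg hzv.ne,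
    ← hinv.recInv_add_sum_filter_notMem hε R hzv.le]
  have hf : ∑ s ∈ (Ioc z v).filter (· ∉ R), ε' z s * (if s = v then 1 else -recInv R ε s v)
      = -∑ s ∈ (Ioc z v).filter (· ∉ R), ε' z s * recInv R ε s v := by
    rw [← sum_neg_distrib]
    refine sum_congr rfl fun s hs => ?_
    have hsv : s ≠ v := fun h => (mem_filter.mp hs).2 (h ▸ hR ▸ Set.mem_insert v _)
    rw [if_neg hsv, mul_neg]
  rw [hf]
  abel

end LeftInverse

theorem IsInvOn.eq_recInv [PartialOrder P] [LocallyFiniteOrder P] [CommRing A] {Q : Set P}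
    {ε η : P → P → A} (h : IsInvOn Q ε η) (hε : ∀ z ∈ Q, ε z z = 1) {u v : P} (hu : u ∈ Q)
    (hv : v ∈ Q) (huv : u ≤ v) : η u v = recInv Q ε u v := by
  have hrow : ∀ a ∈ Q, a ≤ v →
      η a v + ∑ z ∈ (Ioc a v).filter (· ∈ Q), ε a z * η z v = if a = v then 1 else 0 := by
    intro a ha hav
    rw [← h.2.1 a ha v hv, sum_filter_Icc_eq_add (· ∈ Q) _ hav, if_pos ha, hε a ha, one_mul]
  refine eq_recInv_of_recurrence (f := (η · v)) subset_rfl ?_ (fun a ha hav => ?_) hu huv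
  · simpa using hrow v hv le_rfl
  · rw [eq_neg_iff_add_eq_zero, hrow a ha hav.le, if_neg hav.ne]

open AddMonoidAlgebra

noncomputable def invertVars : AP P →ₐ[ℚ] AP P :=
  mapDomainAlgHom ℚ ℚ (negAddMonoidHom : (P →₀ ℤ) →+ (P →₀ ℤ))

lemma invertVars_apply (p : AP P) : invertVars p = mapDomain (fun g : P →₀ ℤ => -g) p := rfl

section Theta

variable [PartialOrder P] [LocallyFiniteOrder P] {mob : P → P → ℚ}

lemma sum_Icc_mob_left (hmob : IsInvOn Set.univ zeta mob) (a b : P) :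
    ∑ z ∈ Icc a b, mob z b = if a = b then 1 else 0 := by
  have h := hmob.2.1 a trivial b trivial
  simp only [Set.mem_univ, filter_true] at h
  rw [← h]
  exact sum_congr rfl fun z hz => by rw [zeta, if_pos (mem_Icc.mp hz).1, one_mul]

lemma sum_Icc_mob_right (hmob : IsInvOn Set.univ zeta mob) (a b : P) :
    ∑ z ∈ Icc a b, mob a z = if a = b then 1 else 0 := by
  have h := hmob.2.2 a trivial b trivial
  simp only [Set.mem_univ, filter_true] at h
  rw [← h]
  exact sum_congr rfl fun z hz => by rw [zeta, if_pos (mem_Icc.mp hz).2, mul_one]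

lemma theta_self (hmob : IsInvOn Set.univ zeta mob) (z : P) : theta mob z z = 1 := by
  have hmob_self : mob z z = 1 := by simpa using sum_Icc_mob_left hmob z z
  rw [theta, Icc_self, sum_singleton, hmob_self, one_smul, sub_self, one_def]

noncomputable def thetaBar (mob : P → P → ℚ) (x y : P) : AP P :=
  ∑ z ∈ Icc x y, mob z y • single (tv y - tv z) (1 : ℚ)

lemma isLeftInverse_thetaBar_theta (hmob : IsInvOn Set.univ zeta mob) :
    IsLeftInverse (thetaBar mob) (theta mob) := by
  intro a b
  calc ∑ s ∈ Icc a b, thetaBar mob a s * theta mob s b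
      = ∑ s ∈ Icc a b, ∑ c ∈ Icc a s, ∑ d ∈ Icc s b,
          (mob c s * mob d b) • single (tv d - tv c) (1 : ℚ) := by
        refine sum_congr rfl fun s _ => ?_
        rw [thetaBar, theta, sum_mul_sum]
        refine sum_congr rfl fun c _ => sum_congr rfl fun d _ => ?_
        rw [smul_mul_smul_comm, single_mul_single, one_mul, sub_add_sub_cancel']
    _ = ∑ c ∈ Icc a b, ∑ d ∈ Icc c b, ∑ s ∈ Icc c d,
          (mob c s * mob d b) • single (tv d - tv c) (1 : ℚ) := by
        rw [← sum_Icc_sum_Icc_comm]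
        exact sum_congr rfl fun c _ => sum_Icc_sum_Icc_comm _ c b
    _ = ∑ c ∈ Icc a b, mob c b • (1 : AP P) := by
        refine sum_congr rfl fun c hc => ?_
        simp_rw [← sum_smul, ← sum_mul, sum_Icc_mob_right hmob, ite_mul, one_mul, zero_mul,
          ite_smul, zero_smul]
        rw [sum_ite_eq, if_pos (left_mem_Icc.mpr (mem_Icc.mp hc).2), sub_self, one_def]
    _ = if a = b then 1 else 0 := by
        rw [← sum_smul, sum_Icc_mob_left hmob]
        split_ifs <;> simp

lemma thetaBar_eq (u v : P) :
    thetaBar mob u v = single (tv v - tv u) (1 : ℚ) * invertVars (theta mob u v) := by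
  rw [thetaBar, theta, map_sum, mul_sum]
  refine sum_congr rfl fun z _ => ?_
  rw [map_smul, invertVars_apply, mapDomain_single, mul_smul_comm, single_mul_single, one_mul]
  congr 2
  abel

lemma recInv_thetaBar (Q : Set P) {u v : P} (huv : u ≤ v) :
    recInv Q (thetaBar mob) u v
      = single (tv v - tv u) (1 : ℚ) * invertVars (recInv Q (theta mob) u v) := by
  rw [show thetaBar mob = fun a b => single (tv b - tv a) (1 : ℚ) * invertVars (theta mob a b)
    from funext₂ fun a b => thetaBar_eq a b]
  exact recInv_map invertVars (fun a b => single (tv b - tv a) (1 : ℚ))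
    (fun a b c => by rw [single_mul_single, one_mul, sub_add_sub_cancel'])
    (fun a => by rw [sub_self, one_def]) Q (theta mob) huv

end Theta

/-- let `x < y` in `P` and let `Q, Q' ⊆ P` complement the interval `[x,y]_P`.
Then `Inv_Q θ (x, y; t) = -(t_y/t_x) · Inv_{Q'} θ (x, y; t⁻¹)`, where the substitution
`t ↦ t⁻¹` is realized on `A_P` as the map induced by negation of exponent vectors
(`Finsupp.mapDomain Neg.neg`).  Here `mob` is the Möbius function of `P` and
`invθ`, `invθ'` represent `Inv_Q θ`, `Inv_{Q'} θ`. -/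
theorem statement10 [PartialOrder P] [LocallyFiniteOrder P]
    (x y : P) (hxy : x < y) (Q Q' : Set P)
    (hxQ : x ∈ Q) (hyQ : y ∈ Q) (hxQ' : x ∈ Q') (hyQ' : y ∈ Q')
    (hcompl : ∀ z : P, x < z → z < y → ((z ∈ Q) ↔ ¬ (z ∈ Q')))
    (mob : P → P → ℚ) (hmob : IsInvOn Set.univ zeta mob)
    (invθ : P → P → AP P) (hinvθ : IsInvOn Q (theta mob) invθ)
    (invθ' : P → P → AP P) (hinvθ' : IsInvOn Q' (theta mob) invθ') :
    invθ x y =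
      - (AddMonoidAlgebra.single (tv y - tv x) (1 : ℚ)) *
        (show AP P from AddMonoidAlgebra.mapDomain (fun g : P →₀ ℤ => -g) (invθ' x y)) := by
  have hθ : ∀ z, theta mob z z = 1 := theta_self hmob
  have hQ : ∀ z ∈ Ioc x y, z ∈ Q ↔ z ∈ insert y Q'ᶜ := by
    intro z hz
    obtain ⟨hxz, hzy⟩ := mem_Ioc.mp hz
    rcases hzy.eq_or_lt with rfl | hzy
    · simp [hyQ]
    · simp [hcompl z hxz hzy, hzy.ne]
  calc invθ x y
      = recInv Q (theta mob) x y := hinvθ.eq_recInv (fun z _ => hθ z) hxQ hyQ hxy.le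
    _ = recInv (insert y Q'ᶜ) (theta mob) x y := recInv_congr _ hQ
    _ = -recInv Q' (thetaBar mob) x y := by
      rw [(isLeftInverse_thetaBar_theta hmob).recInv_eq_neg_recInv_insert_compl hθ hxQ' hyQ' hxy,
        neg_neg]
    _ = _ := by
      rw [recInv_thetaBar Q' hxy.le, ← hinvθ'.eq_recInv (fun z _ => hθ z) hxQ' hyQ' hxy.le,
        invertVars_apply, neg_mul]
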